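/- arXiv:1403.3524 — 3 statements merged into one kernel-verified Lean document; each statement's English description precedes it below -/
import Mathlib

section
/- Let B : ℝⁿ → ℝ be differentiable, Y, Y₀, Y₁ ⊆ X ⊆ ℝⁿ, and x : [0,∞) → ℝⁿ a continuously differentiable solution of ẋ = f(x). Suppose B(y) ≤ 0 for all y ∈ Y₀, B(y) > 0 for all y in the closure of Y₁, and ∇B(y)·f(y) ≤ 0 for all y in (closure Y) \ (closure Y₁). Then if x(0) ∈ Y₀, there is no time T ≥ 0 with x(T) ∈ closure Y₁ and x(t) ∈ (closure Y) \ (closure Y₁) for all t ∈ [0,T). -/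
/-- Barrier certificate lemma: a trajectory starting in `Y₀` cannot reach `closure Y₁`
while staying in `closure Y \ closure Y₁`. -/
theorem barrier_certificate {n : ℕ} (X Y Y₀ Y₁ : Set (Fin n → ℝ))
    (hYX : Y ⊆ X) (hY₀X : Y₀ ⊆ X) (hY₁X : Y₁ ⊆ X)
    (f : (Fin n → ℝ) → (Fin n → ℝ)) (hf : Continuous f)
    (B : (Fin n → ℝ) → ℝ) (hB : Differentiable ℝ B)
    (x : ℝ → (Fin n → ℝ))
    (hsol : ∀ t, 0 ≤ t → HasDerivAt x (f (x t)) t)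
    (hxC1 : ContDiffOn ℝ 1 x (Set.Ici 0))
    (hB0 : ∀ y ∈ Y₀, B y ≤ 0)
    (hB1 : ∀ y ∈ closure Y₁, 0 < B y)
    (hB2 : ∀ y ∈ closure Y \ closure Y₁, fderiv ℝ B y (f y) ≤ 0)
    (hx0 : x 0 ∈ Y₀) :
    ¬ ∃ T : ℝ, 0 ≤ T ∧ x T ∈ closure Y₁ ∧
        ∀ t ∈ Set.Ico (0 : ℝ) T, x t ∈ closure Y \ closure Y₁ := by
  rintro ⟨T, hT, hxT, hstay⟩
  set g : ℝ → ℝ := fun t => B (x t) with hg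
  rcases eq_or_lt_of_le hT with rfl | hTpos
  · exact absurd (hB1 _ hxT) (not_lt.2 (hB0 _ hx0))
  have hgderiv : ∀ t ∈ Set.Ici (0 : ℝ),
      HasDerivAt g (fderiv ℝ B (x t) (f (x t))) t := by
    intro t ht
    exact (hB (x t)).hasFDerivAt.comp_hasDerivAt t (hsol t ht)
  have hgcont : ContinuousOn g (Set.Icc 0 T) := by
    intro t ht
    exact ((hgderiv t ht.1).continuousAt).continuousWithinAt
  have hanti : AntitoneOn g (Set.Icc 0 T) := by
    apply antitoneOn_of_deriv_nonpos (convex_Icc 0 T) hgcont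
    · intro t ht
      rw [interior_Icc] at ht
      exact (hgderiv t (le_of_lt ht.1)).differentiableAt.differentiableWithinAt
    · intro t ht
      rw [interior_Icc] at ht
      rw [(hgderiv t (le_of_lt ht.1)).deriv]
      exact hB2 _ (hstay t ⟨le_of_lt ht.1, ht.2⟩)
  have h1 : g T ≤ g 0 :=
    hanti (Set.left_mem_Icc.2 hT) (Set.right_mem_Icc.2 hT) hT
  exact absurd (hB1 _ hxT) (not_lt.2 (h1.trans (hB0 _ hx0)))
end

section
/- Every finite path π from q to q' in a finite directed graph G can be reduced, by repeatedly deleting repeated edges and consecutive repetitions of vertices, to a path π̃ from q to q' with no repeated edges and no consecutive vertex repetitions, such that for every length-3 subpath q₀q₁q₂ of π̃: if (q₁,q₁) ∉ E then q₀q₁q₂ is a subpath of π, and otherwise π contains a subpath of the form q₀q₁…q₁q₂ (one or more copies of q₁). -/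
/-!
First collapse every run of equal consecutive vertices (`List.destutter'`): a window
`q₀q₁q₂` of the result comes from a window `q₀q₁⋯q₁q₂` of `π`, with a single `q₁` unless
`(q₁,q₁)` is an edge. Then, while some edge `ab` is traversed twice, cut out the closed walk
between the two traversals, `u ab m ab v ↦ u ab v`. A window of length at most 3 cannot
straddle the kept edge `ab`, so every such window of the shorter path already occurs in the
longer one, and so does each of its edges.
-/

/-- `l` is a path from `q` to `q'` in the directed graph with edge relation `E`. -/
def IsPath {V : Type*} (E : V → V → Prop) (l : List V) (q q' : V) : Prop :=
  l.Chain' E ∧ l.head? = some q ∧ l.getLast? = some q'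

namespace List

variable {α : Type*}

theorem IsChain.of_forall_pair_infix {R : α → α → Prop} {l l' : List α}
    (hpair : ∀ a b, [a, b] <:+: l' → [a, b] <:+: l) (hl : l.IsChain R) : l'.IsChain R :=
  isChain_iff_forall_rel_of_append_cons_cons.2 fun a b u v h =>
    isChain_pair.1 (hl.infix (hpair a b ⟨u, v, by simp [h]⟩))

theorem rel_of_isChain_of_replicate_infix {R : α → α → Prop} {l : List α} {q₀ q₁ q₂ : α}
    {m : ℕ} (hl : l.IsChain R) (hm : 2 ≤ m) (h : q₀ :: (replicate m q₁ ++ [q₂]) <:+: l) :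
    R q₁ q₁ := by
  have hpair : [q₁, q₁] <:+: q₀ :: (replicate m q₁ ++ [q₂]) := by
    obtain ⟨k, rfl⟩ := Nat.exists_eq_add_of_le hm
    exact ⟨[q₀], replicate k q₁ ++ [q₂], by simp [replicate_add]⟩
  exact isChain_pair.1 (hl.infix (hpair.trans h))

theorem infix_append_or_infix_append_of_length_le {l x y z : List α}
    (h : l <:+: x ++ y ++ z) (hl : l.length ≤ y.length + 1) : l <:+: x ++ y ∨ l <:+: y ++ z := by
  rcases infix_append_iff.1 h with h | h | ⟨l₁, l₂, rfl, h₁, h₂⟩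
  · exact .inl h
  · exact .inr (infix_append_of_infix_right h)
  · by_cases hy : l₁.length ≤ y.length
    · exact .inr (infix_append_iff.2 (.inr (.inr
        ⟨l₁, l₂, rfl, suffix_of_suffix_length_le h₁ (suffix_append x y) hy, h₂⟩)))
    · obtain rfl : l₂ = [] := eq_nil_of_length_eq_zero (by simp at hl; omega)
      exact .inl (by simpa using h₁.isInfix)

theorem exists_eq_append_of_mem_zip_tail {a b : α} :
    ∀ {l : List α}, (a, b) ∈ l.zip l.tail → ∃ u v, l = u ++ a :: b :: v
  | [], h | [_], h => by simp at h
  | c :: d :: r, h => by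
    rcases mem_cons.1 h with h | h
    · obtain ⟨rfl, rfl⟩ := Prod.mk.inj h
      exact ⟨[], r, rfl⟩
    · obtain ⟨u, v, huv⟩ := exists_eq_append_of_mem_zip_tail h
      exact ⟨c :: u, v, by simp [huv]⟩

theorem exists_loop_of_not_nodup_zip_tail :
    ∀ {l : List α}, l.IsChain (· ≠ ·) → ¬(l.zip l.tail).Nodup →
      ∃ u m v a b, l = u ++ a :: b :: m ++ a :: b :: v
  | [], _, h | [_], _, h => by simp at h
  | c :: d :: r, hl, hdup => by
    have hcd : c ≠ d := (isChain_cons_cons.1 hl).1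
    by_cases hmem : (c, d) ∈ (d :: r).zip r
    · obtain ⟨_ | ⟨e, u⟩, v, huv⟩ := exists_eq_append_of_mem_zip_tail hmem
      · exact absurd (cons.inj huv).1.symm hcd
      · exact ⟨[], u, v, c, d, by simp [(cons.inj huv).2]⟩
    · have hdup' : ¬((d :: r).zip r).Nodup := fun h => hdup (nodup_cons.2 ⟨hmem, h⟩)
      obtain ⟨u, m, v, a, b, huv⟩ := exists_loop_of_not_nodup_zip_tail (l := d :: r) hl.tail hdup'
      exact ⟨c :: u, m, v, a, b, by simp [huv]⟩

theorem infix_of_infix_cut_loop {w u m v : List α} {a b : α} (hw : w.length ≤ 3)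
    (h : w <:+: u ++ a :: b :: v) : w <:+: u ++ a :: b :: m ++ a :: b :: v := by
  rcases infix_append_or_infix_append_of_length_le (y := [a, b]) (by simpa using h)
    (by simpa using hw) with h | h
  · exact h.trans ⟨[], m ++ a :: b :: v, by simp⟩
  · exact h.trans ⟨u ++ a :: b :: m, [], by simp⟩

theorem exists_nodup_zip_tail_of_isChain_ne (l : List α) (hl : l.IsChain (· ≠ ·)) :
    ∃ l', (l'.zip l'.tail).Nodup ∧ l'.head? = l.head? ∧ l'.getLast? = l.getLast? ∧
      ∀ w : List α, w.length ≤ 3 → w <:+: l' → w <:+: l := by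
  by_cases hnd : (l.zip l.tail).Nodup
  · exact ⟨l, hnd, rfl, rfl, fun _ _ h => h⟩
  obtain ⟨u, m, v, a, b, rfl⟩ := exists_loop_of_not_nodup_zip_tail hl hnd
  have hcut : ∀ w : List α, w.length ≤ 3 → w <:+: u ++ a :: b :: v →
      w <:+: u ++ a :: b :: m ++ a :: b :: v := fun _ => infix_of_infix_cut_loop
  obtain ⟨l', hnd', hhead, hlast, hinfix⟩ := exists_nodup_zip_tail_of_isChain_ne
    (u ++ a :: b :: v) (hl.of_forall_pair_infix fun _ _ => hcut _ (by simp))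
  refine ⟨l', hnd', ?_, ?_, fun w hw h => hcut w hw (hinfix w hw h)⟩
  · cases u <;> simp [hhead]
  · simp [hlast, getLast?_append, getLast?_cons]
termination_by l.length
decreasing_by subst_vars; simp; omega

theorem head?_destutter' (R : α → α → Prop) [DecidableRel R] (a : α) (l : List α) :
    (l.destutter' R a).head? = some a := by
  induction l with
  | nil => rfl
  | cons b l ih =>
    by_cases hab : R a b
    · simp [destutter'_cons_pos _ hab]
    · simpa [destutter'_cons_neg _ hab] using ih

section DestutterNe

variable [DecidableEq α]

theorem getLast?_destutter'_ne (a : α) (l : List α) :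
    (l.destutter' (· ≠ ·) a).getLast? = (a :: l).getLast? := by
  induction l generalizing a with
  | nil => rfl
  | cons b l ih =>
    by_cases hab : a = b
    · subst hab
      rw [destutter'_cons_neg _ (not_not.2 rfl), ih, getLast?_cons_cons]
    · rw [destutter'_cons_pos _ hab]
      simp [getLast?_cons, ih]

theorem IsChain.destutter'_ne {R : α → α → Prop} {a : α} {l : List α}
    (h : (a :: l).IsChain R) : (l.destutter' (· ≠ ·) a).IsChain R := by
  induction l generalizing a with
  | nil => exact isChain_singleton a
  | cons b l ih =>
    by_cases hab : a = b
    · subst hab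
      rw [destutter'_cons_neg _ (not_not.2 rfl)]
      exact ih h.tail
    · rw [destutter'_cons_pos _ hab]
      obtain ⟨t, ht⟩ := head?_eq_some_iff.1 (head?_destutter' (· ≠ ·) b l)
      rw [ht, isChain_cons_cons]
      exact ⟨(isChain_cons_cons.1 h).1, ht ▸ ih h.tail⟩

theorem exists_replicate_prefix_of_prefix_destutter'_ne {c d : α} :
    ∀ {a : α} {l : List α}, [c, d] <+: l.destutter' (· ≠ ·) a →
      ∃ m, 1 ≤ m ∧ replicate m c ++ [d] <+: a :: l
  | a, [], h => by simpa using h.length_le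
  | a, b :: l, h => by
    by_cases hab : a = b
    · subst hab
      rw [destutter'_cons_neg _ (not_not.2 rfl)] at h
      obtain ⟨m, hm, hp⟩ := exists_replicate_prefix_of_prefix_destutter'_ne h
      obtain ⟨k, rfl⟩ := Nat.exists_eq_add_of_le' hm
      obtain ⟨rfl, -⟩ := cons_prefix_cons.1 hp
      exact ⟨k + 2, by omega, cons_prefix_cons.2 ⟨rfl, hp⟩⟩
    · rw [destutter'_cons_pos _ hab] at h
      obtain ⟨rfl, hd⟩ := cons_prefix_cons.1 h
      obtain ⟨t, ht⟩ := head?_eq_some_iff.1 (head?_destutter' (· ≠ ·) b l)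
      obtain ⟨rfl, -⟩ := cons_prefix_cons.1 (ht ▸ hd)
      exact ⟨1, le_rfl, by simp⟩

theorem exists_replicate_infix_of_infix_destutter'_ne {q₀ q₁ q₂ : α} :
    ∀ {a : α} {l : List α}, [q₀, q₁, q₂] <:+: l.destutter' (· ≠ ·) a →
      ∃ m, 1 ≤ m ∧ q₀ :: (replicate m q₁ ++ [q₂]) <:+: a :: l
  | a, [], h => by simpa using h.length_le
  | a, b :: l, h => by
    by_cases hab : a = b
    · subst hab
      rw [destutter'_cons_neg _ (not_not.2 rfl)] at h
      obtain ⟨m, hm, hinfix⟩ := exists_replicate_infix_of_infix_destutter'_ne h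
      exact ⟨m, hm, infix_cons hinfix⟩
    · rw [destutter'_cons_pos _ hab, infix_cons_iff] at h
      rcases h with h | h
      · obtain ⟨rfl, hp⟩ := cons_prefix_cons.1 h
        obtain ⟨m, hm, hp⟩ := exists_replicate_prefix_of_prefix_destutter'_ne hp
        exact ⟨m, hm, (cons_prefix_cons.2 ⟨rfl, hp⟩).isInfix⟩
      · obtain ⟨m, hm, hinfix⟩ := exists_replicate_infix_of_infix_destutter'_ne h
        exact ⟨m, hm, infix_cons hinfix⟩

end DestutterNe

end List

theorem path_reduction_general {V : Type*} (E : V → V → Prop)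
    (q q' : V) (π : List V) (hπ : IsPath E π q q') :
    ∃ πr : List V, IsPath E πr q q' ∧ (πr.zip πr.tail).Nodup ∧ πr.Chain' (· ≠ ·) ∧
      ∀ q₀ q₁ q₂ : V, [q₀, q₁, q₂] <:+: πr →
        ((¬ E q₁ q₁ → [q₀, q₁, q₂] <:+: π) ∧
          (E q₁ q₁ → ∃ m : ℕ, 1 ≤ m ∧ (q₀ :: (List.replicate m q₁ ++ [q₂])) <:+: π)) := by
  classical
  obtain ⟨hE, hhead, hlast⟩ := hπ
  obtain ⟨l, rfl⟩ := List.head?_eq_some_iff.1 hhead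
  obtain ⟨πr, hnodup, hhead', hlast', hshort⟩ :=
    (l.destutter' (· ≠ ·) q).exists_nodup_zip_tail_of_isChain_ne (List.isChain_destutter' _ _ _)
  have hpair : ∀ a b, [a, b] <:+: πr → [a, b] <:+: l.destutter' (· ≠ ·) q :=
    fun a b => hshort [a, b] (by simp)
  refine ⟨πr, ⟨hE.destutter'_ne.of_forall_pair_infix hpair,
      by rw [hhead', List.head?_destutter'], by rw [hlast', List.getLast?_destutter'_ne, hlast]⟩,
    hnodup, (List.isChain_destutter' _ _ _).of_forall_pair_infix hpair, fun q₀ q₁ q₂ h => ?_⟩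
  obtain ⟨m, hm, hinfix⟩ :=
    List.exists_replicate_infix_of_infix_destutter'_ne (hshort _ (by simp) h)
  refine ⟨fun hq₁ => ?_, fun _ => ⟨m, hm, hinfix⟩⟩
  obtain rfl : m = 1 := by
    by_contra hm₁
    exact hq₁ (List.rel_of_isChain_of_replicate_infix hE (by omega) hinfix)
  simpa using hinfix

/-- Every path from `q` to `q'` in a finite directed graph can be reduced to a path `πr`
from `q` to `q'` with no repeated edges and no consecutive vertex repetitions, such that
every length-3 subpath `q₀q₁q₂` of `πr` with `(q₁,q₁) ∉ E` is a subpath of the original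
path, and otherwise the original path contains a subpath of the form `q₀q₁⁺q₂`. -/
theorem path_reduction {V : Type*} [Finite V] (E : V → V → Prop)
    (q q' : V) (π : List V) (hπ : IsPath E π q q') :
    ∃ πr : List V, IsPath E πr q q' ∧ (πr.zip πr.tail).Nodup ∧ πr.Chain' (· ≠ ·) ∧
      ∀ q₀ q₁ q₂ : V, [q₀, q₁, q₂] <:+: πr →
        ((¬ E q₁ q₁ → [q₀, q₁, q₂] <:+: π) ∧
          (E q₁ q₁ → ∃ m : ℕ, 1 ≤ m ∧ (q₀ :: (List.replicate m q₁ ++ [q₂])) <:+: π)) :=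
  path_reduction_general E q q' π hπ
end

section
/- Combining the barrier certificate conditions with the trace condition: let Σ₀, Σ₁, Σ̃ ⊆ 2^Π, Y₀ = ⋃_{a∈Σ₀}⟦a⟧, Y₁ = ⋃_{a∈Σ₁}⟦a⟧, Ỹ = ⋃_{a∈Σ̃}⟦a⟧, Y = Y₀ ∪ Y₁ ∪ Ỹ. If there exists a differentiable B : X → ℝ with B ≤ 0 on Y₀, B > 0 on closure(Y₁), and ∇B·f ≤ 0 on closure(Y) \ closure(Y₁), then no trajectory x of ẋ = f(x) admits times t₀ < t₁ with x(t₀) ∈ Y₀, x(t₁) ∈ Y₁, and x(t) ∈ Y for all t ∈ [t₀, t₁]. -/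
/-- Barrier certificate for invalidating strings of the form `a₀ ã₀ … ã_k a₁`:
if a barrier certificate exists for `Y₀`, `Y₁` and `Y = Y₀ ∪ Y₁ ∪ Ỹ`, then no trajectory
can start in `Y₀`, later reach `Y₁`, and stay in `Y` in between. -/
theorem barrier_invalidates_string {n : ℕ} {P : Type*}
    (Rgn : Set P → Set (Fin n → ℝ))
    (S₀ S₁ St : Set (Set P))
    (Y₀ Y₁ Yt Y X : Set (Fin n → ℝ))
    (hY₀ : Y₀ = ⋃ a ∈ S₀, Rgn a) (hY₁ : Y₁ = ⋃ a ∈ S₁, Rgn a)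
    (hYt : Yt = ⋃ a ∈ St, Rgn a) (hY : Y = Y₀ ∪ Y₁ ∪ Yt) (hYX : Y ⊆ X)
    (f : (Fin n → ℝ) → (Fin n → ℝ)) (hf : Continuous f)
    (B : (Fin n → ℝ) → ℝ) (hB : Differentiable ℝ B)
    (hB0 : ∀ y ∈ Y₀, B y ≤ 0)
    (hB1 : ∀ y ∈ closure Y₁, 0 < B y)
    (hB2 : ∀ y ∈ closure Y \ closure Y₁, fderiv ℝ B y (f y) ≤ 0) :
    ∀ x : ℝ → (Fin n → ℝ), (∀ t, HasDerivAt x (f (x t)) t) →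
      ¬ ∃ t₀ t₁ : ℝ, t₀ < t₁ ∧ x t₀ ∈ Y₀ ∧ x t₁ ∈ Y₁ ∧
        ∀ t ∈ Set.Icc t₀ t₁, x t ∈ Y := by
  intro x hx
  rintro ⟨t₀, t₁, ht, hx0, hx1, hstay⟩
  have hxc : Continuous x := by
    exact continuous_iff_continuousAt.2 fun t => (hx t).continuousAt
  set g : ℝ → ℝ := fun t => B (x t) with hg
  have hgd : ∀ t, HasDerivAt g (fderiv ℝ B (x t) (f (x t))) t := fun t =>
    (hB (x t)).hasFDerivAt.comp_hasDerivAt t (hx t)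
  -- the set of times in [t₀,t₁] where x is in closure Y₁
  set T : Set ℝ := {t | t ∈ Set.Icc t₀ t₁ ∧ x t ∈ closure Y₁} with hT
  have hTne : T.Nonempty := ⟨t₁, ⟨le_of_lt ht, le_refl t₁⟩, subset_closure hx1⟩
  have hTbdd : BddBelow T := ⟨t₀, fun t htm => htm.1.1⟩
  have hTclosed : IsClosed T := by
    have : T = Set.Icc t₀ t₁ ∩ x ⁻¹' closure Y₁ := rfl
    rw [this]
    exact isClosed_Icc.inter (isClosed_closure.preimage hxc)
  set s : ℝ := sInf T with hs
  have hsT : s ∈ T := hTclosed.csInf_mem hTne hTbdd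
  have hsB : 0 < g s := hB1 _ hsT.2
  have hst₀ : t₀ ≤ s := hsT.1.1
  rcases eq_or_lt_of_le hst₀ with h | h
  · exact absurd (hB0 _ hx0) (not_le.2 (h ▸ hsB))
  · -- on [t₀, s), x t ∉ closure Y₁ and x t ∈ Y, so g' ≤ 0
    have hmono : AntitoneOn g (Set.Icc t₀ s) := by
      apply antitoneOn_of_deriv_nonpos (convex_Icc t₀ s)
        (hB.continuous.comp hxc).continuousOn
      · intro t htm
        exact ((hgd t).differentiableAt).differentiableWithinAt
      · intro t htm
        rw [interior_Icc] at htm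
        have ht1 : t ∈ Set.Icc t₀ t₁ := ⟨le_of_lt htm.1, le_of_lt (lt_of_lt_of_le htm.2 hsT.1.2)⟩
        have hnot : x t ∉ closure Y₁ := by
          intro hmem
          exact absurd (csInf_le hTbdd ⟨ht1, hmem⟩) (not_le.2 htm.2)
        have hder := hB2 (x t) ⟨subset_closure (hstay t ht1), hnot⟩
        show deriv g t ≤ 0
        rw [(hgd t).deriv]
        exact hder
    have : g s ≤ g t₀ :=
      hmono (Set.left_mem_Icc.2 (le_of_lt h)) (Set.right_mem_Icc.2 (le_of_lt h)) (le_of_lt h)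
    exact absurd (this.trans (hB0 _ hx0)) (not_le.2 hsB)
end
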